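/- (𝒥(R), ⋆) is a loop with unit element t: t ⋆ f = f = f ⋆ t for all f ∈ 𝒥(R); for all f, h ∈ 𝒥(R) there is a unique g ∈ 𝒥(R) with f ⋆ g = h; and for all g, h ∈ 𝒥(R) there is a unique f ∈ 𝒥(R) with f ⋆ g = h. -/

import Mathlib

/-!
Write `f = t + u`, `g = t + v`, `h = t + w` with `u, v, w = O(t²)`; then `f ⋆ g = h` reads
`u + v + u′v = w`. For fixed `u` this is `v + u′v = w − u`, for fixed `v` it is `u + u′v = w − v`.
In both cases the term added to the unknown has its `tⁿ`-coefficient determined by the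
coefficients of the unknown below `tⁿ` (as `u′` has no constant term, resp. as `v = O(t²)`),
so the equation has exactly one solution, found degree by degree, and that solution is `O(t²)`
because the right-hand side is.
-/

open PowerSeries

/-- The set `𝒥(R)` of formal power series `t + ∑_{i≥1} α_i t^{i+1}`. -/
def Jset (R : Type*) [Ring R] : Set (PowerSeries R) :=
  {f | coeff 0 f = 0 ∧ coeff 1 f = 1}

/-- The formal derivative `d/dt` on `R[[t]]` (coefficientwise). -/
noncomputable def Dser {R : Type*} [Ring R] (f : PowerSeries R) : PowerSeries R :=
  PowerSeries.mk fun n => (n + 1 : ℕ) • coeff (n + 1) f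

/-- The product `f ⋆ g := t + (f − t) + (g − t) + (f − t)′·(g − t)`. -/
noncomputable def Jstar {R : Type*} [Ring R] (f g : PowerSeries R) : PowerSeries R :=
  X + (f - X) + (g - X) + Dser (f - X) * (g - X)

section PowerSeries

variable {R : Type*} [Ring R]

def StrictlyCausal (T : R⟦X⟧ → R⟦X⟧) : Prop :=
  ∀ n u u', (∀ j < n, coeff j u = coeff j u') → coeff n (T u) = coeff n (T u')

section StrictlyCausal

variable {T : R⟦X⟧ → R⟦X⟧}

theorem StrictlyCausal.coeff_eq_of_coeff_add_eq (hT : StrictlyCausal T) {u u' : R⟦X⟧} {n : ℕ}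
    (h : ∀ j < n, coeff j (u + T u) = coeff j (u' + T u')) :
    ∀ j < n, coeff j u = coeff j u' := by
  induction n with
  | zero => simp
  | succ n ih =>
    intro j hj
    rcases Nat.lt_succ_iff_lt_or_eq.mp hj with hj | rfl
    · exact ih (fun j hj => h j (by omega)) j hj
    · have hlow := ih (fun j hj => h j (by omega))
      have hj := h j (by omega)
      rw [map_add, map_add, hT j u u' hlow] at hj
      exact add_right_cancel hj

theorem StrictlyCausal.exists_add_eq (hT : StrictlyCausal T) (c : R⟦X⟧) :
    ∃ u, u + T u = c := by
  -- Picard iteration: the `n`-th iterate is already correct below degree `n`.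
  let seq : ℕ → R⟦X⟧ := fun n => (fun u => c - T u)^[n] 0
  have seq_succ (n : ℕ) : seq (n + 1) = c - T (seq n) :=
    Function.iterate_succ_apply' _ _ _
  have step : ∀ n, ∀ j < n, coeff j (seq n) = coeff j (seq (n + 1)) := by
    intro n
    induction n with
    | zero => simp
    | succ n ih =>
      intro j hj
      rw [seq_succ n, seq_succ (n + 1), map_sub, map_sub,
        hT j _ _ fun i hi => ih i (by omega)]
  have stable (j : ℕ) : ∀ n, j < n → coeff j (seq n) = coeff j (seq (j + 1)) := by
    intro n hn
    induction n, Nat.succ_le_of_lt hn using Nat.le_induction with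
    | base => rfl
    | succ n hjn ih => rw [← step n j (by omega), ih (by omega)]
  let u : R⟦X⟧ := mk fun j => coeff j (seq (j + 1))
  refine ⟨u, ext fun n => ?_⟩
  have hagree : ∀ j < n, coeff j u = coeff j (seq n) := fun j hj => by
    rw [coeff_mk, stable j n hj]
  rw [map_add, hT n u (seq n) hagree, coeff_mk, seq_succ, map_sub, sub_add_cancel]

theorem StrictlyCausal.existsUnique_add_eq (hT : StrictlyCausal T) (c : R⟦X⟧) :
    ∃! u, u + T u = c := by
  obtain ⟨u, hu⟩ := hT.exists_add_eq c
  refine ⟨u, hu, fun u' hu' => ext fun n => ?_⟩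
  exact hT.coeff_eq_of_coeff_add_eq (n := n + 1) (by rw [hu, hu']; simp) n n.lt_succ_self

theorem StrictlyCausal.X_pow_dvd_of_X_pow_dvd_add (hT : StrictlyCausal T) (hT0 : T 0 = 0)
    {u : R⟦X⟧} {n : ℕ} (h : X ^ n ∣ u + T u) : X ^ n ∣ u := by
  rw [X_pow_dvd_iff] at h ⊢
  intro j hj
  simpa using hT.coeff_eq_of_coeff_add_eq (u' := 0) (fun j hj => by simp [hT0, h j hj]) j hj

theorem StrictlyCausal.existsUnique_X_pow_dvd_add_eq (hT : StrictlyCausal T) (hT0 : T 0 = 0)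
    {n : ℕ} {c : R⟦X⟧} (hc : X ^ n ∣ c) : ∃! u, X ^ n ∣ u ∧ u + T u = c := by
  obtain ⟨u, hu, huniq⟩ := hT.existsUnique_add_eq c
  exact ⟨u, ⟨hT.X_pow_dvd_of_X_pow_dvd_add hT0 (hu ▸ hc), hu⟩, fun u' hu' => huniq u' hu'.2⟩

end StrictlyCausal

theorem strictlyCausal_mul_left {a : R⟦X⟧} (ha : constantCoeff a = 0) :
    StrictlyCausal (a * ·) := by
  intro n u u' h
  simp only [coeff_mul]
  refine Finset.sum_congr rfl fun p hp => ?_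
  rw [Finset.HasAntidiagonal.mem_antidiagonal] at hp
  rcases Nat.eq_zero_or_pos p.1 with hp1 | hp1
  · simp [hp1, ha]
  · rw [h p.2 (by omega)]

theorem coeff_Dser (f : R⟦X⟧) (n : ℕ) : coeff n (Dser f) = (n + 1) • coeff (n + 1) f := by
  simp [Dser]

@[simp]
theorem Dser_zero : Dser (0 : R⟦X⟧) = 0 := by
  ext n
  simp [coeff_Dser]

theorem constantCoeff_Dser (f : R⟦X⟧) : constantCoeff (Dser f) = coeff 1 f := by
  simp [← coeff_zero_eq_constantCoeff_apply, coeff_Dser]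

theorem strictlyCausal_Dser_mul {v : R⟦X⟧} (hv : X ^ 2 ∣ v) :
    StrictlyCausal (fun u => Dser u * v) := by
  rw [X_pow_dvd_iff] at hv
  intro n u u' h
  simp only [coeff_mul, coeff_Dser]
  refine Finset.sum_congr rfl fun p hp => ?_
  rw [Finset.HasAntidiagonal.mem_antidiagonal] at hp
  by_cases hp2 : p.2 < 2
  · simp [hv p.2 hp2]
  · rw [h (p.1 + 1) (by omega)]

theorem X_pow_dvd_mul_of_dvd_right {n : ℕ} {b : R⟦X⟧} (hb : X ^ n ∣ b) (a : R⟦X⟧) :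
    X ^ n ∣ a * b := by
  obtain ⟨q, rfl⟩ := hb
  exact ⟨a * q, by rw [← mul_assoc, ← mul_assoc, (commute_X_pow a n).eq]⟩

theorem mem_Jset_iff {f : R⟦X⟧} : f ∈ Jset R ↔ X ^ 2 ∣ f - X := by
  simp [Jset, X_pow_dvd_iff, Nat.le_one_iff_eq_zero_or_eq_one, or_imp,
    forall_and, coeff_X, sub_eq_zero]

theorem existsUnique_mem_Jset_iff {P : R⟦X⟧ → Prop} :
    (∃! f, f ∈ Jset R ∧ P f) ↔ ∃! u, X ^ 2 ∣ u ∧ P (X + u) :=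
  (Equiv.subRight X).existsUnique_congr fun f => by simp [mem_Jset_iff]

theorem Jstar_sub_X (f g : R⟦X⟧) : Jstar f g - X = (f - X) + (g - X) + Dser (f - X) * (g - X) := by
  rw [Jstar]
  abel

theorem Jstar_X_add_right_eq_iff (f v h : R⟦X⟧) :
    Jstar f (X + v) = h ↔ v + Dser (f - X) * v = h - f := by
  rw [Jstar, add_sub_cancel_left, eq_sub_iff_add_eq', ← sub_add_cancel f X]
  constructor <;> intro e <;> rw [← e] <;> abel

theorem Jstar_X_add_left_eq_iff (u g h : R⟦X⟧) :
    Jstar (X + u) g = h ↔ u + Dser u * (g - X) = h - g := by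
  rw [Jstar, add_sub_cancel_left, eq_sub_iff_add_eq', ← sub_add_cancel g X]
  constructor <;> intro e <;> rw [← e] <;> abel

end PowerSeries

/-- `(𝒥(R), ⋆)` is a loop with unit element `t`. -/
theorem statement2 (R : Type*) [Ring R] :
    (∀ f ∈ Jset R, Jstar (X : PowerSeries R) f = f ∧ Jstar f (X : PowerSeries R) = f) ∧
    (∀ f ∈ Jset R, ∀ g ∈ Jset R, Jstar f g ∈ Jset R) ∧
    (∀ f ∈ Jset R, ∀ h ∈ Jset R, ∃! g, g ∈ Jset R ∧ Jstar f g = h) ∧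
    (∀ g ∈ Jset R, ∀ h ∈ Jset R, ∃! f, f ∈ Jset R ∧ Jstar f g = h) := by
  refine ⟨fun f _ => ⟨by simp [Jstar], by simp [Jstar]⟩, fun f hf g hg => ?_,
    fun f hf h hh => ?_, fun g hg h hh => ?_⟩
  · rw [mem_Jset_iff] at *
    rw [Jstar_sub_X]
    exact dvd_add (dvd_add hf hg) (X_pow_dvd_mul_of_dvd_right hg _)
  · have hT := strictlyCausal_mul_left (a := Dser (f - X)) <| by
      rw [constantCoeff_Dser, map_sub, hf.2, coeff_one_X, sub_self]
    rw [existsUnique_mem_Jset_iff]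
    simp only [Jstar_X_add_right_eq_iff]
    rw [mem_Jset_iff] at hf hh
    exact hT.existsUnique_X_pow_dvd_add_eq (mul_zero _) (by simpa using dvd_sub hh hf)
  · rw [existsUnique_mem_Jset_iff]
    simp only [Jstar_X_add_left_eq_iff]
    rw [mem_Jset_iff] at hg hh
    exact (strictlyCausal_Dser_mul hg).existsUnique_X_pow_dvd_add_eq (by simp)
      (by simpa using dvd_sub hh hg)
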